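/- (Discrete Loomis–Whitney inequality.) Let n ≥ 1 and let N_1, …, N_{n+1} be linearly independent unit vectors in ℝ^{n+1}. Let ℒ := {z_1 N_1 + ⋯ + z_{n+1} N_{n+1} : (z_1, …, z_{n+1}) ∈ ℤ^{n+1}} be the lattice they generate; for each j let H_j be the hyperplane through the origin with normal N_j, π_{N_j} : ℝ^{n+1} → H_j the orthogonal projection, and ℒ(H_j) := π_{N_j}(ℒ). Then there is a constant C (depending on N_1, …, N_{n+1}) such that for all functions g_j : ℒ(H_j) → [0, ∞), j = 1, …, n+1, one has (∑_{z ∈ ℒ} ∏_{j=1}^{n+1} g_j(π_{N_j}(z))^{2/n})^{n/2} ≤ C ∏_{j=1}^{n+1} (∑_{k ∈ ℒ(H_j)} g_j(k)²)^{1/2}. -/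
import Mathlib


open MeasureTheory Real RealInnerProductSpace ENNReal

variable {n : ℕ}

/-- The lattice generated by the vectors `N 0, …, N n` in `ℝ^{n+1}`. -/
def genLattice (N : Fin (n + 1) → EuclideanSpace ℝ (Fin (n + 1))) :
    Set (EuclideanSpace ℝ (Fin (n + 1))) :=
  {x | ∃ z : Fin (n + 1) → ℤ, x = ∑ j, (z j : ℝ) • N j}

/-- Orthogonal projection onto the hyperplane through the origin with unit normal `N`:
`π_N(x) = x − (x·N)N`. -/
noncomputable def projHyp (N x : EuclideanSpace ℝ (Fin (n + 1))) :
    EuclideanSpace ℝ (Fin (n + 1)) :=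
  x - (⟪x, N⟫ : ℝ) • N

section Aux

open Fin Function

/-- Hölder inequality for tsums on a countable type, many functions. -/
lemma tsum_prod_rpow_le {ι α : Type*} [Fintype ι] [Countable α] [MeasurableSpace α]
    [MeasurableSingletonClass α]
    (f : ι → α → ℝ≥0∞) (p : ι → ℝ) (hp : ∑ i, p i = 1) (h2p : ∀ i, 0 ≤ p i) :
    ∑' a, ∏ i, f i a ^ p i ≤ ∏ i, (∑' a, f i a) ^ p i := by
  have := ENNReal.lintegral_prod_norm_pow_le (μ := Measure.count) Finset.univ
    (f := f) (fun i _ => (measurable_of_countable _).aemeasurable) hp (fun i _ => h2p i)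
  simpa [MeasureTheory.lintegral_count] using this

/-- Hölder inequality for tsums on a countable type, two functions. -/
lemma tsum_mul_rpow_le {α : Type*} [Countable α] [MeasurableSpace α]
    [MeasurableSingletonClass α] (f g : α → ℝ≥0∞) {p q : ℝ}
    (hp : 0 ≤ p) (hq : 0 ≤ q) (hpq : p + q = 1) :
    ∑' a, f a ^ p * g a ^ q ≤ (∑' a, f a) ^ p * (∑' a, g a) ^ q := by
  have := ENNReal.lintegral_mul_norm_pow_le (μ := Measure.count)
    (measurable_of_countable f).aemeasurable (measurable_of_countable g).aemeasurable hp hq hpq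
  simpa [MeasureTheory.lintegral_count] using this

/-- snoc commutes with insertNth (at a castSucc'd index). -/
lemma snoc_insertNth_comm {β : Type*} (m : ℕ) (j : Fin (m+1)) (y : Fin m → β) (b t : β) :
    (Fin.snoc (j.insertNth b y) t : Fin (m+2) → β) =
      (j.castSucc).insertNth b (Fin.snoc y t : Fin (m+1) → β) := by
  funext i
  refine Fin.lastCases ?_ (fun i' => ?_) i
  · have h : (Fin.last (m+1)) = (j.castSucc).succAbove (Fin.last m) := by
      rw [Fin.succAbove_castSucc_of_le _ _ (Fin.le_last j)]
      simp
    conv_rhs => rw [h, Fin.insertNth_apply_succAbove]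
    simp
  · rw [Fin.snoc_castSucc]
    refine Fin.succAboveCases j ?_ (fun k => ?_) i'
    · simp
    · rw [Fin.insertNth_apply_succAbove, ← Fin.castSucc_succAbove_castSucc,
        Fin.insertNth_apply_succAbove]
      simp

/-- The snoc equivalence. -/
def snocEquiv (k : ℕ) : ((Fin k → ℤ) × ℤ) ≃ (Fin (k+1) → ℤ) where
  toFun p := Fin.snoc p.1 p.2
  invFun x := (Fin.init x, x (Fin.last k))
  left_inv p := by simp
  right_inv x := by simp

lemma tsum_snoc (k : ℕ) (F : (Fin (k+1) → ℤ) → ℝ≥0∞) :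
    ∑' x, F x = ∑' y : Fin k → ℤ, ∑' t : ℤ, F (Fin.snoc y t) := by
  rw [← (snocEquiv k).tsum_eq F, ← ENNReal.tsum_prod]
  rfl

/-- Discrete Loomis–Whitney inequality on `ℤ^{m+1}`. -/
lemma discrete_LW_aux : ∀ m : ℕ, 1 ≤ m → ∀ h : Fin (m+1) → ((Fin (m+1) → ℤ) → ℝ≥0∞),
    (∀ j x t, h j (Function.update x j t) = h j x) →
    (∑' x : Fin (m+1) → ℤ, ∏ j, h j x) ≤
      ∏ j, (∑' y : Fin m → ℤ, h j (j.insertNth 0 y) ^ (m : ℝ)) ^ (m : ℝ)⁻¹ := by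
  intro m hm
  induction m, hm using Nat.le_induction with
  | base =>
    intro h hinv
    have h0x : ∀ (a b : ℤ), h 0 ![a, b] = h 0 ![0, b] := by
      intro a b
      have e : (![0, b] : Fin 2 → ℤ) = Function.update ![a, b] 0 0 := by
        funext i; fin_cases i <;> simp
      rw [e, hinv]
    have h1x : ∀ (a b : ℤ), h 1 ![a, b] = h 1 ![a, 0] := by
      intro a b
      have e : (![a, 0] : Fin 2 → ℤ) = Function.update ![a, b] 1 0 := by
        funext i; fin_cases i <;> simp
      rw [e, hinv]
    have hins0 : ∀ y : Fin 1 → ℤ, (Fin.insertNth (0 : Fin 2) (0:ℤ) y) = ![0, y 0] := by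
      intro y; funext i; fin_cases i <;> simp [Fin.insertNth_zero]
    have hins1 : ∀ y : Fin 1 → ℤ, (Fin.insertNth (1 : Fin 2) (0:ℤ) y) = ![y 0, 0] := by
      intro y
      rw [show (1 : Fin 2) = Fin.last 1 from rfl, Fin.insertNth_last']
      funext i; fin_cases i <;> simp [Fin.snoc] <;>
        exact congrArg y (Subsingleton.elim _ _)
    refine le_of_eq ?_
    calc ∑' x : Fin 2 → ℤ, ∏ j, h j x
        = ∑' y : Fin 1 → ℤ, ∑' t : ℤ, ∏ j, h j (Fin.snoc y t) := tsum_snoc 1 _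
      _ = ∑' y : Fin 1 → ℤ, ∑' t : ℤ, h 0 ![0, t] * h 1 ![y 0, 0] := by
          refine tsum_congr fun y => tsum_congr fun t => ?_
          have hsnoc : (Fin.snoc y t : Fin 2 → ℤ) = ![y 0, t] := by
            funext i; fin_cases i <;> simp [Fin.snoc] <;>
              exact congrArg y (Subsingleton.elim _ _)
          rw [Fin.prod_univ_two, hsnoc, h0x, h1x]
      _ = (∑' t : ℤ, h 0 ![0, t]) * (∑' y : Fin 1 → ℤ, h 1 ![y 0, 0]) := by
          simp_rw [ENNReal.tsum_mul_right]
          rw [ENNReal.tsum_mul_left]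
      _ = ∏ j, (∑' y : Fin 1 → ℤ, h j (Fin.insertNth j 0 y) ^ ((1:ℕ) : ℝ)) ^ (((1:ℕ):ℝ))⁻¹ := by
          simp only [Nat.cast_one, ENNReal.rpow_one, inv_one]
          rw [Fin.prod_univ_two]
          congr 1
          · rw [← (Equiv.funUnique (Fin 1) ℤ).tsum_eq (fun t => h 0 ![0, t])]
            exact tsum_congr fun y => by rw [hins0]; rfl
          · exact (tsum_congr fun y => by rw [hins1]).symm
  | succ m hm IH =>
    intro h hinv
    set M : ℝ := ((m + 1 : ℕ) : ℝ) with hMdef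
    have hM0 : (0:ℝ) < M := by positivity
    have hm0 : (0:ℝ) < (m:ℝ) := by exact_mod_cast hm
    set A : Fin (m+1) → (Fin (m+1) → ℤ) → ℝ≥0∞ :=
      fun j x' => ∑' t : ℤ, h j.castSucc (Fin.snoc x' t) ^ M with hAdef
    set B : Fin (m+2) → ℝ≥0∞ :=
      fun j => ∑' y : Fin (m+1) → ℤ, h j (j.insertNth 0 y) ^ M with hBdef
    set G : (Fin (m+1) → ℤ) → ℝ≥0∞ := fun x' => ∏ j, (A j x') ^ (m:ℝ)⁻¹ with hGdef
    set F : (Fin (m+1) → ℤ) → ℝ≥0∞ :=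
      fun x' => h (Fin.last (m+1)) (Fin.snoc x' 0) ^ M with hFdef
    have key1 : ∀ (x' : Fin (m+1) → ℤ) (t : ℤ),
        h (Fin.last (m+1)) (Fin.snoc x' t) = h (Fin.last (m+1)) (Fin.snoc x' 0) := by
      intro x' t
      have e : (Fin.snoc x' (0:ℤ) : Fin (m+2) → ℤ) =
          Function.update (Fin.snoc x' t) (Fin.last (m+1)) 0 := by
        funext i
        refine Fin.lastCases ?_ (fun i' => ?_) i
        · simp
        · rw [Fin.snoc_castSucc, Function.update_of_ne (Fin.castSucc_lt_last i').ne,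
            Fin.snoc_castSucc]
      rw [e, hinv]
    have key2 : ∀ x' : Fin (m+1) → ℤ,
        ∑' t : ℤ, ∏ j : Fin (m+1), h j.castSucc (Fin.snoc x' t) ≤
          ∏ j : Fin (m+1), (A j x') ^ M⁻¹ := by
      intro x'
      have hps : ∑ _i : Fin (m+1), M⁻¹ = 1 := by
        rw [Finset.sum_const, Finset.card_univ, Fintype.card_fin, nsmul_eq_mul, hMdef]
        exact mul_inv_cancel₀ hM0.ne'
      have := tsum_prod_rpow_le (ι := Fin (m+1)) (α := ℤ)
        (fun j t => h j.castSucc (Fin.snoc x' t) ^ M) (fun _ => M⁻¹) hps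
        (fun _ => inv_nonneg.mpr hM0.le)
      calc ∑' t : ℤ, ∏ j : Fin (m+1), h j.castSucc (Fin.snoc x' t)
          = ∑' t : ℤ, ∏ j : Fin (m+1), (h j.castSucc (Fin.snoc x' t) ^ M) ^ M⁻¹ := by
            refine tsum_congr fun t => Finset.prod_congr rfl fun j _ => ?_
            rw [← ENNReal.rpow_mul, mul_inv_cancel₀ hM0.ne', ENNReal.rpow_one]
        _ ≤ ∏ j : Fin (m+1), (∑' t : ℤ, h j.castSucc (Fin.snoc x' t) ^ M) ^ M⁻¹ := this
        _ = ∏ j : Fin (m+1), (A j x') ^ M⁻¹ := rfl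
    have hAinv : ∀ (j : Fin (m+1)) (x' : Fin (m+1) → ℤ) (s : ℤ),
        A j (Function.update x' j s) = A j x' := by
      intro j x' s
      refine tsum_congr fun t => ?_
      rw [Fin.snoc_update, hinv]
    have hpr : ∀ (b : Fin (m+1) → ℝ≥0∞),
        (∏ j, b j ^ (m:ℝ)⁻¹) ^ ((m:ℝ) * M⁻¹) = ∏ j, b j ^ M⁻¹ := by
      intro b
      rw [← ENNReal.prod_rpow_of_nonneg (by positivity : (0:ℝ) ≤ (m:ℝ) * M⁻¹)]
      refine Finset.prod_congr rfl fun j _ => ?_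
      rw [← ENNReal.rpow_mul]
      congr 1
      rw [hMdef]
      push_cast
      field_simp
    have hsumG : ∑' x' : Fin (m+1) → ℤ, G x' ≤
        ∏ j : Fin (m+1), (B j.castSucc) ^ (m:ℝ)⁻¹ := by
      have hIH := IH (fun j x' => (A j x') ^ (m:ℝ)⁻¹)
        (fun j x' s => by simp only [hAinv])
      refine hIH.trans (le_of_eq (Finset.prod_congr rfl fun j _ => ?_))
      congr 1
      calc ∑' y : Fin m → ℤ, ((A j (j.insertNth 0 y)) ^ (m:ℝ)⁻¹) ^ (m:ℝ)
          = ∑' y : Fin m → ℤ, A j (j.insertNth 0 y) := by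
            refine tsum_congr fun y => ?_
            rw [← ENNReal.rpow_mul, inv_mul_cancel₀ hm0.ne', ENNReal.rpow_one]
        _ = ∑' y : Fin m → ℤ, ∑' t : ℤ,
              h j.castSucc ((j.castSucc).insertNth 0 (Fin.snoc y t)) ^ M := by
            refine tsum_congr fun y => tsum_congr fun t => ?_
            rw [snoc_insertNth_comm]
        _ = B j.castSucc :=
            (tsum_snoc m (fun Y => h j.castSucc ((j.castSucc).insertNth 0 Y) ^ M)).symm
    have hsumF : ∑' x' : Fin (m+1) → ℤ, F x' = B (Fin.last (m+1)) := by
      refine tsum_congr fun x' => ?_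
      show h (Fin.last (m+1)) (Fin.snoc x' 0) ^ M = _
      rw [Fin.insertNth_last']
    have hexp : (m:ℝ) * M⁻¹ + M⁻¹ = 1 := by
      rw [hMdef]
      push_cast
      field_simp
    calc ∑' x : Fin (m+2) → ℤ, ∏ j, h j x
        = ∑' x' : Fin (m+1) → ℤ, ∑' t : ℤ, ∏ j : Fin (m+2), h j (Fin.snoc x' t) :=
          tsum_snoc (m+1) _
      _ = ∑' x' : Fin (m+1) → ℤ, (∑' t : ℤ, ∏ j : Fin (m+1), h j.castSucc (Fin.snoc x' t)) *
            h (Fin.last (m+1)) (Fin.snoc x' 0) := by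
          refine tsum_congr fun x' => ?_
          rw [← ENNReal.tsum_mul_right]
          refine tsum_congr fun t => ?_
          rw [Fin.prod_univ_castSucc, key1]
      _ ≤ ∑' x' : Fin (m+1) → ℤ, (∏ j : Fin (m+1), (A j x') ^ M⁻¹) *
            h (Fin.last (m+1)) (Fin.snoc x' 0) := by
          exact ENNReal.tsum_le_tsum fun x' => mul_le_mul_left (key2 x') _
      _ = ∑' x' : Fin (m+1) → ℤ, G x' ^ ((m:ℝ) * M⁻¹) * F x' ^ M⁻¹ := by
          refine tsum_congr fun x' => ?_
          congr 1
          · exact (hpr (fun j => A j x')).symm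
          · show h (Fin.last (m+1)) (Fin.snoc x' 0) =
              (h (Fin.last (m+1)) (Fin.snoc x' 0) ^ M) ^ M⁻¹
            rw [← ENNReal.rpow_mul, mul_inv_cancel₀ hM0.ne', ENNReal.rpow_one]
      _ ≤ (∑' x' : Fin (m+1) → ℤ, G x') ^ ((m:ℝ) * M⁻¹) *
            (∑' x' : Fin (m+1) → ℤ, F x') ^ M⁻¹ :=
          tsum_mul_rpow_le G F (by positivity) (inv_nonneg.mpr hM0.le) hexp
      _ ≤ (∏ j : Fin (m+1), (B j.castSucc) ^ (m:ℝ)⁻¹) ^ ((m:ℝ) * M⁻¹) *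
            (B (Fin.last (m+1))) ^ M⁻¹ := by
          rw [hsumF]
          exact mul_le_mul_left (ENNReal.rpow_le_rpow hsumG (by positivity)) _
      _ = ∏ j : Fin (m+2), B j ^ M⁻¹ := by
          conv_rhs => rw [Fin.prod_univ_castSucc]
          congr 1
          exact hpr (fun j => B j.castSucc)

end Aux

namespace DiscreteLWRed

noncomputable def Phi {n : ℕ} (N : Fin (n + 1) → EuclideanSpace ℝ (Fin (n + 1)))
    (x : Fin (n + 1) → ℤ) : EuclideanSpace ℝ (Fin (n + 1)) :=
  ∑ j, (x j : ℝ) • N j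

lemma projHyp_add_smul {n : ℕ} {N : EuclideanSpace ℝ (Fin (n + 1))} (hN : ‖N‖ = 1)
    (v : EuclideanSpace ℝ (Fin (n + 1))) (c : ℝ) :
    projHyp N (v + c • N) = projHyp N v := by
  unfold projHyp
  rw [inner_add_left, real_inner_smul_left, real_inner_self_eq_norm_sq, hN]
  rw [one_pow, mul_one, add_smul]
  abel

lemma projHyp_update {n : ℕ} {N : Fin (n + 1) → EuclideanSpace ℝ (Fin (n + 1))}
    (hN_unit : ∀ j, ‖N j‖ = 1) (j : Fin (n + 1)) (x : Fin (n + 1) → ℤ) (t : ℤ) :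
    projHyp (N j) (Phi N (Function.update x j t)) = projHyp (N j) (Phi N x) := by
  have hφ : Phi N (Function.update x j t) = Phi N x + ((t : ℝ) - (x j : ℝ)) • N j := by
    unfold Phi
    have he : ∀ i ∈ Finset.univ, ((Function.update x j t i : ℤ) : ℝ) • N i
        = (x i : ℝ) • N i + (if i = j then ((t : ℝ) - (x j : ℝ)) • N j else 0) := by
      intro i _
      by_cases hij : i = j
      · subst hij
        rw [Function.update_self, if_pos rfl, sub_smul]
        abel
      · rw [Function.update_of_ne hij, if_neg hij, add_zero]
    rw [Finset.sum_congr rfl he, Finset.sum_add_distrib,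
      Finset.sum_ite_eq' Finset.univ j]
    simp
  rw [hφ, projHyp_add_smul (hN_unit j)]

lemma proj_sub {n : ℕ} (N u v : EuclideanSpace ℝ (Fin (n + 1)))
    (h : projHyp N u = projHyp N v) :
    u - v = ((⟪u, N⟫ : ℝ) - (⟪v, N⟫ : ℝ)) • N := by
  unfold projHyp at h
  rw [sub_smul]
  calc u - v
      = (u - (⟪u, N⟫ : ℝ) • N) - (v - (⟪v, N⟫ : ℝ) • N)
        + ((⟪u, N⟫ : ℝ) • N - (⟪v, N⟫ : ℝ) • N) := by abel
    _ = (⟪u, N⟫ : ℝ) • N - (⟪v, N⟫ : ℝ) • N := by rw [h, sub_self, zero_add]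

end DiscreteLWRed

open DiscreteLWRed in
/-- **Discrete Loomis–Whitney inequality.** Let `N₁, …, N_{n+1}` be linearly independent
unit vectors in `ℝ^{n+1}` generating the lattice `ℒ`; let `ℒ(H_j) = π_{N_j}(ℒ)`. There is a
constant `C` such that for all `g_j : ℒ(H_j) → [0,∞)`,
`(∑_{z ∈ ℒ} ∏_j g_j(π_{N_j} z)^{2/n})^{n/2} ≤ C ∏_j (∑_{k ∈ ℒ(H_j)} g_j(k)²)^{1/2}`. -/
theorem discrete_loomis_whitney (n : ℕ) (hn : 1 ≤ n)
    (N : Fin (n + 1) → EuclideanSpace ℝ (Fin (n + 1)))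
    (hN_indep : LinearIndependent ℝ N) (hN_unit : ∀ j, ‖N j‖ = 1) :
    ∃ C : ℝ, 0 < C ∧
      ∀ g : Fin (n + 1) → EuclideanSpace ℝ (Fin (n + 1)) → ℝ,
        (∀ j x, 0 ≤ g j x) →
        (∑' z : ↥(genLattice N),
            ∏ j, ENNReal.ofReal (g j (projHyp (N j) ↑z)) ^ ((2 : ℝ) / n)) ^ ((n : ℝ) / 2) ≤
          ENNReal.ofReal C *
            ∏ j, (∑' k : ↥(projHyp (N j) '' genLattice N),
              ENNReal.ofReal (g j ↑k) ^ 2) ^ ((1 : ℝ) / 2) := by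
  classical
  have hn0 : (n : ℝ) ≠ 0 := Nat.cast_ne_zero.mpr (by omega)
  -- injectivity facts
  have hPhiInj : Function.Injective (Phi N) := by
    intro x x' hxx
    have hs : ∑ i, ((x i : ℝ) - (x' i : ℝ)) • N i = 0 := by
      simp_rw [sub_smul]
      rw [Finset.sum_sub_distrib, sub_eq_zero]
      exact hxx
    have hz := Fintype.linearIndependent_iff.mp hN_indep _ hs
    funext i
    have hi : (x i : ℝ) = (x' i : ℝ) := by
      have := hz i
      linarith
    exact_mod_cast hi
  have hinsInj : ∀ (j : Fin (n+1)) (y y' : Fin n → ℤ),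
      projHyp (N j) (Phi N (j.insertNth 0 y)) = projHyp (N j) (Phi N (j.insertNth 0 y')) →
      y = y' := by
    intro j y y' hψ
    set Y : Fin (n+1) → ℤ := j.insertNth 0 y with hY
    set Y' : Fin (n+1) → ℤ := j.insertNth 0 y' with hY'
    have hsub := proj_sub (N j) _ _ hψ
    set c : ℝ := (⟪Phi N Y, N j⟫ : ℝ) - (⟪Phi N Y', N j⟫ : ℝ) with hc
    have hw : ∑ i, (((Y i : ℝ) - (Y' i : ℝ)) - (if i = j then c else 0)) • N i = 0 := by
      simp_rw [sub_smul, ite_smul, zero_smul]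
      rw [Finset.sum_sub_distrib, Finset.sum_sub_distrib,
        Finset.sum_ite_eq' Finset.univ j]
      simp only [Finset.mem_univ, if_true]
      have h1 : ∑ i, ((Y i : ℝ)) • N i = Phi N Y := rfl
      have h2 : ∑ i, ((Y' i : ℝ)) • N i = Phi N Y' := rfl
      rw [h1, h2, sub_eq_zero, sub_eq_iff_eq_add']
      exact sub_eq_iff_eq_add'.mp hsub
    have hz := Fintype.linearIndependent_iff.mp hN_indep _ hw
    funext k
    have hk := hz (j.succAbove k)
    rw [if_neg (Fin.succAbove_ne j k)] at hk
    simp only [hY, hY', Fin.insertNth_apply_succAbove] at hk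
    have hyk : (y k : ℝ) = (y' k : ℝ) := by linarith
    exact_mod_cast hyk
  -- equivalences
  let eLat : (Fin (n+1) → ℤ) ≃ ↥(genLattice N) :=
    Equiv.ofBijective (fun x => ⟨Phi N x, ⟨x, rfl⟩⟩)
      ⟨fun a b hab => hPhiInj (congrArg Subtype.val hab),
       fun z => by
        obtain ⟨x, hx⟩ := z.2
        exact ⟨x, Subtype.ext hx.symm⟩⟩
  let eImg : ∀ j : Fin (n+1), (Fin n → ℤ) ≃ ↥(projHyp (N j) '' genLattice N) := fun j =>
    Equiv.ofBijective (fun y => ⟨projHyp (N j) (Phi N (j.insertNth 0 y)),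
        ⟨Phi N (j.insertNth 0 y), ⟨j.insertNth 0 y, rfl⟩, rfl⟩⟩)
      ⟨fun a b hab => hinsInj j a b (congrArg Subtype.val hab),
       fun k => by
        obtain ⟨w, hw⟩ := k
        obtain ⟨v, hv, hproj⟩ := hw
        obtain ⟨x, hx⟩ := hv
        refine ⟨Fin.removeNth j x, Subtype.ext ?_⟩
        have h1 : j.insertNth (0:ℤ) (Fin.removeNth j x) = Function.update x j 0 :=
          Fin.insertNth_removeNth j 0 x
        have hv' : Phi N x = v := hx.symm
        show projHyp (N j) (Phi N (j.insertNth 0 (Fin.removeNth j x))) = w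
        rw [h1, projHyp_update hN_unit, hv', hproj]⟩
  refine ⟨1, one_pos, fun g hg => ?_⟩
  set hh : Fin (n+1) → (Fin (n+1) → ℤ) → ℝ≥0∞ :=
    fun j x => ENNReal.ofReal (g j (projHyp (N j) (Phi N x))) ^ ((2:ℝ)/(n:ℝ)) with hhdef
  have hinv : ∀ (j : Fin (n+1)) (x : Fin (n+1) → ℤ) (t : ℤ),
      hh j (Function.update x j t) = hh j x := by
    intro j x t
    simp only [hhdef]
    rw [projHyp_update hN_unit]
  have hL : (∑' z : ↥(genLattice N),
        ∏ j, ENNReal.ofReal (g j (projHyp (N j) (z : EuclideanSpace ℝ (Fin (n+1))))) ^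
          ((2:ℝ)/(n:ℝ)))
      = ∑' x : Fin (n+1) → ℤ, ∏ j, hh j x := by
    rw [← Equiv.tsum_eq eLat]
    exact tsum_congr fun x => rfl
  have hT : ∀ j : Fin (n+1), (∑' y : Fin n → ℤ, hh j (j.insertNth 0 y) ^ (n:ℝ))
      = ∑' k : ↥(projHyp (N j) '' genLattice N),
          ENNReal.ofReal (g j (k : EuclideanSpace ℝ (Fin (n+1)))) ^ 2 := by
    intro j
    rw [← Equiv.tsum_eq (eImg j)]
    refine tsum_congr fun y => ?_
    show (ENNReal.ofReal (g j (projHyp (N j) (Phi N (j.insertNth 0 y)))) ^ ((2:ℝ)/(n:ℝ)))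
        ^ (n:ℝ)
      = ENNReal.ofReal (g j (projHyp (N j) (Phi N (j.insertNth 0 y)))) ^ (2:ℕ)
    rw [← ENNReal.rpow_natCast _ 2, ← ENNReal.rpow_mul]
    congr 1
    push_cast
    field_simp
  rw [ENNReal.ofReal_one, one_mul, hL]
  calc (∑' x : Fin (n+1) → ℤ, ∏ j, hh j x) ^ ((n:ℝ)/2)
      ≤ (∏ j, (∑' y : Fin n → ℤ, hh j (j.insertNth 0 y) ^ (n:ℝ)) ^ ((n:ℝ))⁻¹) ^ ((n:ℝ)/2) :=
        ENNReal.rpow_le_rpow (discrete_LW_aux n hn hh hinv) (by positivity)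
    _ = ∏ j, (∑' k : ↥(projHyp (N j) '' genLattice N),
          ENNReal.ofReal (g j (k : EuclideanSpace ℝ (Fin (n+1)))) ^ 2) ^ ((1:ℝ)/2) := by
        rw [← ENNReal.prod_rpow_of_nonneg (by positivity : (0:ℝ) ≤ (n:ℝ)/2)]
        refine Finset.prod_congr rfl fun j _ => ?_
        rw [hT j, ← ENNReal.rpow_mul]
        congr 1
        field_simp
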